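/- arXiv:2305.01606 — 3 statements merged into one kernel-verified Lean document; each statement's English description precedes it below -/
import Mathlib

section
/- A Pfister form over a field of characteristic ≠ 2 is hyperbolic if and only if it is isotropic. -/
/-
STATEMENT 5: A Pfister form over a field of characteristic ≠ 2 is hyperbolic if
and only if it is isotropic.  Here the n-fold Pfister form ⟨⟨a₁,…,aₙ⟩⟩ is
realized as the diagonal form with coefficients ∏_{i ∈ S} (-aᵢ), S ⊆ {1,…,n}.
-/

noncomputable section

/-- The `n`-fold Pfister form `⟨1,-a₁⟩ ⊗ ⋯ ⊗ ⟨1,-aₙ⟩`, written as a diagonal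
quadratic form indexed by subsets of `Fin n`. -/
def pfisterForm (K : Type) [Field K] {n : ℕ} (a : Fin n → Kˣ) :
    QuadraticForm K (Finset (Fin n) → K) :=
  QuadraticMap.weightedSumSquares K (fun S : Finset (Fin n) => ∏ i ∈ S, (-(a i : K)))

/-- A quadratic form is hyperbolic if it is equivalent to an orthogonal sum of
hyperbolic planes, i.e. to the diagonal form ⟨1,…,1,-1,…,-1⟩ of some even rank. -/
def QuadraticForm.IsHyperbolic {K M : Type} [Field K] [AddCommGroup M] [Module K M]
    (q : QuadraticForm K M) : Prop :=
  ∃ m : ℕ, QuadraticMap.Equivalent q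
    (QuadraticMap.weightedSumSquares K
      (Sum.elim (fun _ : Fin m => (1 : K)) (fun _ : Fin m => (-1 : K))))

/-- A quadratic form is isotropic if it has a nontrivial zero. -/
def QuadraticForm.IsIsotropic {K M : Type} [Field K] [AddCommGroup M] [Module K M]
    (q : QuadraticForm K M) : Prop :=
  ∃ v : M, v ≠ 0 ∧ q v = 0

/-!
Pfister forms are round, i.e. `c • φ ≅ φ` for every nonzero value `c` of `φ`: write
`φ = ψ ⊥ bψ` with `ψ` round and `c = x + b y` for values `x, y` of `ψ`; when `x, y ≠ 0` the
binary identity `⟨x, by⟩ ≅ ⟨c, bcxy⟩` together with `xψ ≅ ψ ≅ yψ` gives `c • φ ≅ φ`.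
Now let `φ = ψ ⊥ bψ` be isotropic. If `ψ` is isotropic it is hyperbolic by induction, hence so
is `φ`. Otherwise an isotropic vector yields nonzero values `x = -b y` of `ψ`, so roundness
gives `bψ ≅ byψ = -xψ ≅ -ψ`, and `ψ ⊥ -ψ` is hyperbolic because `ψ` is diagonal with
nonzero entries.
-/

namespace QuadraticMap

section Field

variable {K M M' : Type*} [Field K] [AddCommGroup M] [Module K M] [AddCommGroup M'] [Module K M']

theorem Equivalent.smul {Q : QuadraticMap K M K} {Q' : QuadraticMap K M' K}
    (h : Q.Equivalent Q') (c : K) : (c • Q).Equivalent (c • Q') :=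
  let ⟨f⟩ := h
  ⟨{ f.toLinearEquiv with map_app' := fun v => by simp [f.map_app] }⟩

theorem Equivalent.neg {Q : QuadraticMap K M K} {Q' : QuadraticMap K M' K}
    (h : Q.Equivalent Q') : (-Q).Equivalent (-Q') := by
  rw [← neg_one_smul K Q, ← neg_one_smul K Q']
  exact h.smul (-1)

theorem mul_self_smul_equivalent (Q : QuadraticMap K M K) {u : K} (hu : u ≠ 0) :
    ((u * u) • Q).Equivalent Q :=
  ⟨{ LinearEquiv.smulOfNeZero K M u hu with
      map_app' := fun v => by simp [QuadraticMap.map_smul] }⟩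

theorem smul_prod (c : K) (Q : QuadraticMap K M K) (Q' : QuadraticMap K M' K) :
    c • Q.prod Q' = (c • Q).prod (c • Q') := by
  ext; simp [mul_add]

theorem map_smul_add_smul (Q : QuadraticMap K M K) (α β : K) (x y : M) :
    Q (α • x + β • y) = α * α * Q x + β * β * Q y + α * β * polar Q x y := by
  rw [QuadraticMap.map_add Q, QuadraticMap.map_smul, QuadraticMap.map_smul, polar_smul_left,
    polar_smul_right, smul_eq_mul, smul_eq_mul, smul_eq_mul, smul_eq_mul]
  ring

/-- The binary identity `⟨b, c⟩ ≅ ⟨d, bcd⟩` for `d = bx² + cy² ≠ 0`, tensored with `Q`. -/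
theorem prod_smul_equivalent_prod_smul (Q : QuadraticMap K M K) {b c d : K} (x y : K)
    (hd : b * x ^ 2 + c * y ^ 2 = d) (hd0 : d ≠ 0) :
    ((d • Q).prod ((b * c * d) • Q)).Equivalent ((b • Q).prod (c • Q)) := by
  let fst := LinearMap.fst K M M
  let snd := LinearMap.snd K M M
  let e : (M × M) ≃ₗ[K] M × M := LinearEquiv.ofLinearMap
    ((x • fst + (-(c * y)) • snd).prod (y • fst + (b * x) • snd))
    (((b * x / d) • fst + (c * y / d) • snd).prod ((-y / d) • fst + (x / d) • snd))
    (by ext u <;> simp [fst, snd] <;> match_scalars <;> field_simp <;> grind)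
    (by ext u <;> simp [fst, snd] <;> match_scalars <;> field_simp <;> grind)
  refine ⟨⟨e, fun uv => ?_⟩⟩
  change b * Q (x • uv.1 + (-(c * y)) • uv.2) + c * Q (y • uv.1 + (b * x) • uv.2) =
    d * Q uv.1 + b * c * d * Q uv.2
  rw [map_smul_add_smul, map_smul_add_smul]
  linear_combination (Q uv.1 + b * c * Q uv.2) * hd

def IsRound (Q : QuadraticMap K M K) : Prop :=
  ∀ v, Q v ≠ 0 → (Q v • Q).Equivalent Q

theorem IsRound.of_equivalent {Q : QuadraticMap K M K} {Q' : QuadraticMap K M' K}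
    (h : Q.Equivalent Q') (hQ' : Q'.IsRound) : Q.IsRound := by
  intro v hv
  have ⟨f⟩ := h
  rw [← f.map_app v] at hv ⊢
  exact ((h.smul _).trans (hQ' _ hv)).trans h.symm

theorem IsRound.prod_smul {Q : QuadraticMap K M K} (hQ : Q.IsRound) (b : K) :
    (Q.prod (b • Q)).IsRound := by
  rintro ⟨u, v⟩ hc
  simp only [prod_apply, smul_apply, smul_eq_mul] at hc ⊢
  rw [smul_prod, smul_smul]
  by_cases hv : Q v = 0
  · rw [hv, mul_zero, add_zero] at hc ⊢
    rw [mul_comm, ← smul_smul]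
    exact (hQ u hc).prod ((hQ u hc).smul b)
  by_cases hu : Q u = 0
  · rw [hu, zero_add] at hc ⊢
    have hb : b ≠ 0 := left_ne_zero_of_mul hc
    have h₁ : ((b * Q v) • Q).Equivalent (b • Q) := by
      rw [← smul_smul]; exact (hQ v hv).smul b
    have h₂ : ((b * Q v * b) • Q).Equivalent Q := by
      rw [show b * Q v * b = b * b * Q v by ring, ← smul_smul]
      exact ((hQ v hv).smul _).trans (mul_self_smul_equivalent Q hb)
    exact (h₁.prod h₂).trans ⟨IsometryEquiv.prodComm _ _⟩
  set c := Q u + b * Q v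
  have h₁ : ((c * b) • Q).Equivalent ((Q u * (b * Q v) * c) • Q) := by
    rw [show Q u * (b * Q v) * c = c * b * (Q u * Q v) by ring, ← smul_smul (c * b),
      ← smul_smul (Q u)]
    exact ((((hQ v hv).smul _).trans (hQ u hu)).smul _).symm
  have h₂ : ((b * Q v) • Q).Equivalent (b • Q) := by
    rw [← smul_smul]; exact (hQ v hv).smul b
  exact ((Equivalent.refl _).prod h₁).trans
    ((prod_smul_equivalent_prod_smul Q 1 1 (by ring) hc).trans ((hQ u hu).prod h₂))

end Field

section WeightedSumSquares

variable {K ι ι' : Type*} [Field K] [Fintype ι] [Fintype ι']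

theorem weightedSumSquares_comp_equivalent (e : ι ≃ ι') (w : ι' → K) :
    (weightedSumSquares K (w ∘ e)).Equivalent (weightedSumSquares K w) :=
  ⟨{ LinearEquiv.funCongrLeft K K e.symm with
      map_app' := fun v => by
        simp only [weightedSumSquares_apply]
        exact (Fintype.sum_equiv e _ _ fun i => by simp [LinearEquiv.funCongrLeft_apply]).symm }⟩

theorem weightedSumSquares_sumElim_equivalent (w : ι → K) (w' : ι' → K) :
    (weightedSumSquares K (Sum.elim w w')).Equivalent
      ((weightedSumSquares K w).prod (weightedSumSquares K w')) :=
  ⟨{ LinearEquiv.sumArrowLequivProdArrow ι ι' K K with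
      map_app' := fun v => by simp [weightedSumSquares_apply, Fintype.sum_sum_type] }⟩

theorem weightedSumSquares_smul (c : K) (w : ι → K) :
    weightedSumSquares K (c • w) = c • weightedSumSquares K w := by
  ext v; simp [weightedSumSquares_apply, Finset.mul_sum, mul_assoc]

theorem weightedSumSquares_neg (w : ι → K) :
    weightedSumSquares K (-w) = -weightedSumSquares K w := by
  ext v; simp [weightedSumSquares_apply]

theorem neg_prod {M M' : Type*} [AddCommGroup M] [Module K M] [AddCommGroup M'] [Module K M']
    (Q : QuadraticMap K M K) (Q' : QuadraticMap K M' K) : (-Q).prod (-Q') = -Q.prod Q' := by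
  ext; simp [add_comm]

end WeightedSumSquares

end QuadraticMap

open QuadraticMap

namespace QuadraticForm

variable {K M M' : Type} [Field K] [AddCommGroup M] [Module K M] [AddCommGroup M'] [Module K M']

theorem IsIsotropic.of_equivalent {Q : QuadraticForm K M} {Q' : QuadraticForm K M'}
    (h : Q.Equivalent Q') (hQ' : Q'.IsIsotropic) : Q.IsIsotropic := by
  obtain ⟨f⟩ := h.symm
  obtain ⟨v, hv, hQv⟩ := hQ'
  exact ⟨f v, by simpa using hv, by rw [f.map_app, hQv]⟩

theorem IsHyperbolic.of_equivalent {Q : QuadraticForm K M} {Q' : QuadraticForm K M'}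
    (h : Q.Equivalent Q') (hQ' : Q'.IsHyperbolic) : Q.IsHyperbolic :=
  let ⟨m, hm⟩ := hQ'
  ⟨m, h.trans hm⟩

def hyperbolicForm (K ι : Type) [Field K] [Fintype ι] : QuadraticForm K ((ι → K) × (ι → K)) :=
  (weightedSumSquares K (1 : ι → K)).prod (-weightedSumSquares K (1 : ι → K))

theorem isHyperbolic_of_equivalent_hyperbolicForm {ι : Type} [Fintype ι] {Q : QuadraticForm K M}
    (h : Q.Equivalent (hyperbolicForm K ι)) : Q.IsHyperbolic := by
  have he := weightedSumSquares_comp_equivalent (Fintype.equivFin ι)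
    (1 : Fin (Fintype.card ι) → K)
  refine ⟨Fintype.card ι, (h.trans (he.prod he.neg)).trans ?_⟩
  rw [← weightedSumSquares_neg]
  exact (weightedSumSquares_sumElim_equivalent _ _).symm

theorem IsHyperbolic.exists_equivalent_hyperbolicForm {Q : QuadraticForm K M}
    (hQ : Q.IsHyperbolic) : ∃ m, Q.Equivalent (hyperbolicForm K (Fin m)) := by
  obtain ⟨m, hm⟩ := hQ
  refine ⟨m, hm.trans ?_⟩
  rw [hyperbolicForm, ← weightedSumSquares_neg]
  exact weightedSumSquares_sumElim_equivalent _ _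

theorem IsHyperbolic.prod {Q : QuadraticForm K M} {Q' : QuadraticForm K M'}
    (hQ : Q.IsHyperbolic) (hQ' : Q'.IsHyperbolic) : IsHyperbolic (Q.prod Q') := by
  obtain ⟨m, hm⟩ := hQ.exists_equivalent_hyperbolicForm
  obtain ⟨m', hm'⟩ := hQ'.exists_equivalent_hyperbolicForm
  have hsum := weightedSumSquares_sumElim_equivalent (1 : Fin m → K) (1 : Fin m' → K)
  rw [Sum.elim_one_one] at hsum
  refine isHyperbolic_of_equivalent_hyperbolicForm (ι := Fin m ⊕ Fin m') ((hm.prod hm').trans ?_)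
  refine Equivalent.trans ⟨IsometryEquiv.prodProdProdComm _ _ _ _⟩ ?_
  rw [neg_prod]
  exact hsum.symm.prod hsum.symm.neg

/-- The isometry onto `hyperbolicForm` is `(x, y) ↦ (p x + q y, q x + p y)` with `p - q = 1` and
`p + q = w`, so that `X² - Y² = (X - Y)(X + Y) = w (x² - y²)`. -/
theorem isHyperbolic_weightedSumSquares_prod_neg (h2 : (2 : K) ≠ 0) {ι : Type} [Fintype ι]
    {w : ι → K} (hw : ∀ i, w i ≠ 0) :
    IsHyperbolic ((weightedSumSquares K w).prod (-weightedSumSquares K w)) := by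
  let p : ι → K := fun i => (w i + 1) / 2
  let q : ι → K := fun i => (w i - 1) / 2
  refine isHyperbolic_of_equivalent_hyperbolicForm (ι := ι) ⟨
    { toFun := fun xy => (p * xy.1 + q * xy.2, q * xy.1 + p * xy.2)
      invFun := fun xy => (w⁻¹ * (p * xy.1 - q * xy.2), w⁻¹ * (p * xy.2 - q * xy.1))
      map_add' := fun _ _ => by
        ext <;> simp only [Prod.fst_add, Prod.snd_add, Pi.add_apply, Pi.mul_apply] <;> ring
      map_smul' := fun _ _ => by ext <;> simp
      left_inv := fun _ => by
        ext i <;> simp only [Pi.mul_apply, Pi.inv_apply, Pi.sub_apply, Pi.add_apply, p, q] <;>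
          field_simp [hw i] <;> ring
      right_inv := fun _ => by
        ext i <;> simp only [Pi.mul_apply, Pi.inv_apply, Pi.sub_apply, Pi.add_apply, p, q] <;>
          field_simp [hw i] <;> ring
      map_app' := fun _ => by
        simp only [hyperbolicForm, prod_apply, neg_apply, weightedSumSquares_apply,
          ← Finset.sum_neg_distrib, ← Finset.sum_add_distrib]
        refine Finset.sum_congr rfl fun i _ => ?_
        simp only [Pi.one_apply, Pi.add_apply, Pi.mul_apply, smul_eq_mul, one_mul, p, q]
        field_simp
        ring }⟩

theorem IsHyperbolic.smul (h2 : (2 : K) ≠ 0) {Q : QuadraticForm K M} (hQ : Q.IsHyperbolic)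
    {c : K} (hc : c ≠ 0) : IsHyperbolic (c • Q) := by
  obtain ⟨m, hm⟩ := hQ.exists_equivalent_hyperbolicForm
  refine IsHyperbolic.of_equivalent (hm.smul c) ?_
  have := isHyperbolic_weightedSumSquares_prod_neg h2 (w := c • (1 : Fin m → K)) (by simp [hc])
  rw [hyperbolicForm, smul_prod, smul_neg]
  rwa [weightedSumSquares_smul] at this

theorem IsHyperbolic.isIsotropic [Nontrivial M] {Q : QuadraticForm K M} (hQ : Q.IsHyperbolic) :
    Q.IsIsotropic := by
  obtain ⟨m, hm⟩ := hQ
  refine IsIsotropic.of_equivalent hm ?_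
  cases m with
  | zero =>
    obtain ⟨f⟩ := hm
    exact absurd f.toLinearEquiv.toEquiv.subsingleton (not_subsingleton M)
  | succ m =>
    refine ⟨Pi.single (.inl 0) 1 + Pi.single (.inr 0) 1, fun h => ?_, ?_⟩
    · simpa using congr_fun h (.inl 0)
    · simp [weightedSumSquares_apply, Fintype.sum_sum_type, Pi.single_apply]

theorem isHyperbolic_prod_smul_of_isIsotropic (h2 : (2 : K) ≠ 0) {Q : QuadraticForm K M}
    (hQ : Q.IsRound) (hQQ : IsHyperbolic (Q.prod (-Q))) (ih : Q.IsIsotropic → Q.IsHyperbolic)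
    {b : K} (hb : b ≠ 0) (hiso : IsIsotropic (Q.prod (b • Q))) :
    IsHyperbolic (Q.prod (b • Q)) := by
  by_cases hQiso : Q.IsIsotropic
  · exact (ih hQiso).prod ((ih hQiso).smul h2 hb)
  obtain ⟨⟨u, v⟩, huv, h0⟩ := hiso
  simp only [prod_apply, smul_apply, smul_eq_mul] at h0
  have anis : ∀ w, Q w = 0 → w = 0 := fun w hw => by_contra fun hw0 => hQiso ⟨w, hw0, hw⟩
  have hv : Q v ≠ 0 := by
    intro hv
    rw [hv, mul_zero, add_zero] at h0
    exact huv (Prod.ext (anis u h0) (anis v hv))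
  have hu : Q u = -(b * Q v) := eq_neg_of_add_eq_zero_left h0
  have hu0 : Q u ≠ 0 := by rw [hu]; exact neg_ne_zero.mpr (mul_ne_zero hb hv)
  have hbQ : (b • Q).Equivalent ((b * Q v) • Q) := by
    rw [← smul_smul]; exact ((hQ v hv).smul b).symm
  rw [show b * Q v = -Q u by rw [hu, neg_neg], neg_smul (Q u) Q] at hbQ
  exact .of_equivalent ((Equivalent.refl Q).prod (hbQ.trans (hQ u hu0).neg)) hQQ

end QuadraticForm

open QuadraticForm

def finsetFinSuccEquiv (n : ℕ) : Finset (Fin n) ⊕ Finset (Fin n) ≃ Finset (Fin (n + 1)) where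
  toFun := Sum.elim (·.map (Fin.succEmb n)) (fun S => insert 0 (S.map (Fin.succEmb n)))
  invFun T :=
    if 0 ∈ T then .inr (T.preimage Fin.succ (Fin.succ_injective n).injOn)
    else .inl (T.preimage Fin.succ (Fin.succ_injective n).injOn)
  left_inv := by
    rintro (S | S) <;> simp <;> ext <;> simp
  right_inv T := by
    by_cases h : 0 ∈ T <;> simp [h] <;> ext i <;> cases i using Fin.cases <;> simp [h]

section Pfister

variable {K : Type} [Field K]

theorem pfisterForm_succ_equivalent {n : ℕ} (a : Fin (n + 1) → Kˣ) :
    (pfisterForm K a).Equivalent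
      ((pfisterForm K (Fin.tail a)).prod ((-(a 0 : K)) • pfisterForm K (Fin.tail a))) := by
  have hw : (fun S => ∏ i ∈ S, -(a i : K)) ∘ finsetFinSuccEquiv n =
      Sum.elim (fun S => ∏ i ∈ S, -(Fin.tail a i : K))
        ((-(a 0 : K)) • fun S => ∏ i ∈ S, -(Fin.tail a i : K)) := by
    ext (S | S) <;> simp [finsetFinSuccEquiv, Fin.tail]
  refine (weightedSumSquares_comp_equivalent (finsetFinSuccEquiv n) _).symm.trans ?_
  unfold pfisterForm
  rw [hw, ← weightedSumSquares_smul]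
  exact weightedSumSquares_sumElim_equivalent _ _

theorem pfisterForm_zero_apply (a : Fin 0 → Kˣ) (v : Finset (Fin 0) → K) :
    pfisterForm K a v = v ∅ * v ∅ := by
  rw [pfisterForm, weightedSumSquares_apply, Fintype.sum_subsingleton _ ∅]
  simp

theorem isRound_pfisterForm : ∀ {n : ℕ} (a : Fin n → Kˣ), (pfisterForm K a).IsRound
  | 0, a => fun v hv => by
    rw [pfisterForm_zero_apply] at hv ⊢
    exact mul_self_smul_equivalent _ (left_ne_zero_of_mul hv)
  | _ + 1, a =>
    .of_equivalent (pfisterForm_succ_equivalent a) ((isRound_pfisterForm _).prod_smul _)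

theorem isHyperbolic_pfisterForm_prod_neg (h2 : (2 : K) ≠ 0) {n : ℕ} (a : Fin n → Kˣ) :
    IsHyperbolic ((pfisterForm K a).prod (-pfisterForm K a)) :=
  isHyperbolic_weightedSumSquares_prod_neg h2 fun _ =>
    Finset.prod_ne_zero_iff.mpr fun i _ => neg_ne_zero.mpr (a i).ne_zero

theorem isHyperbolic_pfisterForm_of_isIsotropic (h2 : (2 : K) ≠ 0) :
    ∀ {n : ℕ} (a : Fin n → Kˣ), (pfisterForm K a).IsIsotropic → (pfisterForm K a).IsHyperbolic
  | 0, a, ⟨v, hv, hQv⟩ => by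
    rw [pfisterForm_zero_apply, mul_self_eq_zero] at hQv
    exact absurd (funext fun S => by rwa [Subsingleton.elim S ∅]) hv
  | _ + 1, a, hiso =>
    have h := pfisterForm_succ_equivalent a
    .of_equivalent h <| isHyperbolic_prod_smul_of_isIsotropic h2 (isRound_pfisterForm _)
      (isHyperbolic_pfisterForm_prod_neg h2 _) (isHyperbolic_pfisterForm_of_isIsotropic h2 _)
      (neg_ne_zero.mpr (a 0).ne_zero) (hiso.of_equivalent h.symm)

end Pfister

theorem outer_forms_stmt5
    (K : Type) [Field K] (h2 : (2 : K) ≠ 0)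
    (n : ℕ) (a : Fin n → Kˣ) :
    (pfisterForm K a).IsHyperbolic ↔ (pfisterForm K a).IsIsotropic :=
  ⟨IsHyperbolic.isIsotropic, isHyperbolic_pfisterForm_of_isIsotropic h2 a⟩

end
end

section
/- Let A be a central simple algebra of degree n over a field F, and let L/F be a separable field extension of degree n. Then there exists an F-algebra embedding L ↪ A if and only if L splits A (i.e., A ⊗_F L is a matrix algebra over L). -/
/-!
If `f : L → A` is an embedding, `A` becomes an `L`-vector space of dimension `n` through right
multiplication by `f L`, on which `A` acts by left multiplication; this gives an `L`-algebra map
`L ⊗[F] A → End_L(A) ≅ Mₙ(L)`, injective because `L ⊗[F] A` is simple (`A` being central simple)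
and hence bijective by counting dimensions.

Conversely, an isomorphism `L ⊗[F] A ≅ Mₙ(L)` makes `Lⁿ` an `A`-module on which `L` acts
`A`-linearly. Since `A` is simple Artinian, its modules are determined by their `F`-dimension, so
`Lⁿ ≅ A` as `A`-modules (both have dimension `n²`), and `L → End_A(Lⁿ) ≅ End_A(A) ≅ Aᵐᵒᵖ`
embeds the commutative `L` in `A`.
-/

open Module
open scoped TensorProduct

namespace Algebra.TensorProduct

variable {K A B ι : Type*} [Field K] [Ring A] [Algebra K A] [Ring B] [Algebra K B]
  (b : Basis ι K B)

theorem basis_repr_tmul_one_mul (a : A) (z : A ⊗[K] B) :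
    (basis A b).repr ((a ⊗ₜ 1) * z) = a • (basis A b).repr z := by
  rw [← map_smul]
  congr 1
  induction z using TensorProduct.induction_on with
  | zero => simp
  | tmul x y => simp [TensorProduct.smul_tmul']
  | add x y hx hy => simp [mul_add, hx, hy]

theorem basis_repr_mul_tmul_one (z : A ⊗[K] B) (a : A) (i : ι) :
    (basis A b).repr (z * (a ⊗ₜ 1)) i = (basis A b).repr z i * a := by
  induction z using TensorProduct.induction_on with
  | zero => simp
  | tmul x y => simp [mul_assoc, Algebra.commutes]
  | add x y hx hy => simp [add_mul, hx, hy]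

def coeffIdeal (I : TwoSidedIdeal (A ⊗[K] B)) (s : Finset ι) (i : ι) : TwoSidedIdeal A :=
  .mk' {x | ∃ w ∈ I, ((basis A b).repr w).support ⊆ s ∧ (basis A b).repr w i = x}
    ⟨0, I.zero_mem, by simp⟩
    (by
      classical
      rintro _ _ ⟨w, hw, hws, rfl⟩ ⟨w', hw', hws', rfl⟩
      refine ⟨w + w', I.add_mem hw hw', ?_, by simp⟩
      simpa using Finsupp.support_add.trans (Finset.union_subset hws hws'))
    (by
      rintro _ ⟨w, hw, hws, rfl⟩
      exact ⟨-w, I.neg_mem hw, by simpa using hws, by simp⟩)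
    (by
      rintro a _ ⟨w, hw, hws, rfl⟩
      refine ⟨(a ⊗ₜ 1) * w, I.mul_mem_left _ _ hw, ?_, by simp [basis_repr_tmul_one_mul]⟩
      rw [basis_repr_tmul_one_mul]
      exact Finsupp.support_smul.trans hws)
    (by
      rintro _ a ⟨w, hw, hws, rfl⟩
      refine ⟨w * (a ⊗ₜ 1), I.mul_mem_right _ _ hw, fun j hj => hws ?_,
        basis_repr_mul_tmul_one b w a i⟩
      rw [Finsupp.mem_support_iff, basis_repr_mul_tmul_one] at hj
      exact Finsupp.mem_support_iff.2 fun h => hj (by rw [h, zero_mul]))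

theorem mem_coeffIdeal {I : TwoSidedIdeal (A ⊗[K] B)} {s : Finset ι} {i : ι} {x : A} :
    x ∈ coeffIdeal b I s i ↔
      ∃ w ∈ I, ((basis A b).repr w).support ⊆ s ∧ (basis A b).repr w i = x :=
  TwoSidedIdeal.mem_mk' ..

theorem card_support_repr_commutator_lt [Nontrivial A] (a : A) (w : A ⊗[K] B) {i : ι}
    (hw : (basis A b).repr w i = 1) :
    ((basis A b).repr ((a ⊗ₜ 1) * w - w * (a ⊗ₜ 1))).support.card <
      ((basis A b).repr w).support.card := by
  classical
  set c := (basis A b).repr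
  have hcoeff : ∀ j, c ((a ⊗ₜ 1) * w - w * (a ⊗ₜ 1)) j = a * c w j - c w j * a := fun j => by
    simp [c, basis_repr_tmul_one_mul, basis_repr_mul_tmul_one]
  have hsupp : (c ((a ⊗ₜ 1) * w - w * (a ⊗ₜ 1))).support ⊆ (c w).support.erase i := fun j hj => by
    rw [Finsupp.mem_support_iff, hcoeff] at hj
    refine Finset.mem_erase.2 ⟨?_, Finsupp.mem_support_iff.2 fun h => hj (by simp [h])⟩
    rintro rfl
    exact hj (by simp [hw])
  calc _ ≤ ((c w).support.erase i).card := Finset.card_le_card hsupp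
    _ < (c w).support.card := Finset.card_erase_lt_of_mem (by simp [hw])

theorem exists_eq_one_tmul_of_forall_commute [Algebra.IsCentral K A] (w : A ⊗[K] B)
    (hw : ∀ a : A, Commute (a ⊗ₜ[K] (1 : B)) w) : ∃ β : B, w = 1 ⊗ₜ β := by
  let b := Basis.ofVectorSpace K B
  let c := (basis A b).repr
  have hscalar : ∀ i, ∃ d : K, algebraMap K A d = c w i := fun i => by
    refine Algebra.mem_bot.1 ?_
    rw [← Algebra.IsCentral.center_eq_bot K A, Subalgebra.mem_center_iff]
    intro a
    simpa [c, basis_repr_tmul_one_mul, basis_repr_mul_tmul_one] using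
      congrArg (fun z => c z i) (hw a).eq
  choose d hd using hscalar
  refine ⟨(c w).sum fun i _ => d i • b i, ?_⟩
  conv_lhs => rw [← (basis A b).linearCombination_repr w]
  rw [Finsupp.linearCombination_apply, Finsupp.sum, Finsupp.sum, TensorProduct.tmul_sum]
  refine Finset.sum_congr rfl fun i _ => ?_
  rw [basis_repr_symm_apply', ← hd, Algebra.algebraMap_eq_smul_one, TensorProduct.smul_tmul]

/-- An element `z ≠ 0` of `I` with fewest coordinates can be normalised, inside `coeffIdeal`, to
have some coordinate `1`; minimality then forces it to commute with `A ⊗ 1`, so it lies in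
`1 ⊗ B`. -/
theorem isSimpleRing_of_isCentral [Algebra.IsCentral K A] [IsSimpleRing A] [IsSimpleRing B] :
    IsSimpleRing (A ⊗[K] B) := by
  let b := Basis.ofVectorSpace K B
  let c := (basis A b).repr
  refine IsSimpleRing.of_eq_bot_or_eq_top fun I => or_iff_not_imp_left.2 fun hI => ?_
  obtain ⟨z, ⟨hzI, hz0⟩, hmin⟩ := (measure fun z => (c z).support.card).wf.has_min
    {z | z ∈ I ∧ z ≠ 0} (by
      by_contra h
      refine hI (eq_bot_iff.2 fun x hx => (TwoSidedIdeal.mem_bot _).2 ?_)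
      by_contra hx0
      exact h ⟨x, hx, hx0⟩)
  obtain ⟨i₀, hi₀⟩ := Finsupp.support_nonempty_iff.2 (c.map_ne_zero_iff.2 hz0)
  obtain ⟨w, hwI, hwz, hw₁⟩ := (mem_coeffIdeal b).1 <|
    IsSimpleRing.one_mem_of_ne_zero_mem (coeffIdeal b I (c z).support i₀)
      (Finsupp.mem_support_iff.1 hi₀) ((mem_coeffIdeal b).2 ⟨z, hzI, le_rfl, rfl⟩)
  have hcomm : ∀ a : A, Commute (a ⊗ₜ[K] (1 : B)) w := fun a => by
    by_contra hne
    refine hmin _ ⟨I.sub_mem (I.mul_mem_left _ _ hwI) (I.mul_mem_right _ _ hwI),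
      sub_ne_zero.2 hne⟩ ?_
    exact (card_support_repr_commutator_lt b a w hw₁).trans_le (Finset.card_le_card hwz)
  obtain ⟨β, rfl⟩ := exists_eq_one_tmul_of_forall_commute w hcomm
  have hβ : β ≠ 0 := by rintro rfl; simp at hw₁
  have hβI : β ∈ I.comap includeRight := by rwa [TwoSidedIdeal.mem_comap]
  have h1 := IsSimpleRing.one_mem_of_ne_zero_mem _ hβ hβI
  rw [TwoSidedIdeal.mem_comap, map_one] at h1
  exact I.eq_top h1

end Algebra.TensorProduct

section SimpleModules

variable {F A : Type*} [Field F] [Ring A] [Algebra F A] [IsSimpleRing A] [FiniteDimensional F A]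

/-- `M × N` is isotypic, so `M` and `N` are both powers of one simple module `S`. -/
theorem IsSimpleRing.nonempty_linearEquiv_of_finrank_eq
    {M N : Type*} [AddCommGroup M] [Module F M] [Module A M] [IsScalarTower F A M]
    [FiniteDimensional F M] [AddCommGroup N] [Module F N] [Module A N] [IsScalarTower F A N]
    [FiniteDimensional F N] (h : finrank F M = finrank F N) : Nonempty (M ≃ₗ[A] N) := by
  have : IsArtinianRing A := IsArtinianRing.of_finite F A
  rcases subsingleton_or_nontrivial (M × N) with hMN | hMN
  · have := (Prod.fst_surjective (α := M) (β := N)).subsingleton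
    have := (Prod.snd_surjective (α := M) (β := N)).subsingleton
    exact ⟨LinearEquiv.ofSubsingleton M N⟩
  obtain ⟨S, hS⟩ := IsAtomic.exists_atom (Submodule A (M × N))
  rw [← isSimpleModule_iff_isAtom] at hS
  have hiso := IsSimpleRing.isIsotypic A (M × N) S
  have : Module.Finite A M := Module.Finite.of_restrictScalars_finite F A M
  have : Module.Finite A N := Module.Finite.of_restrictScalars_finite F A N
  obtain ⟨k, ⟨eM⟩⟩ := (hiso.of_injective _ LinearMap.inl_injective).linearEquiv_fun
  obtain ⟨l, ⟨eN⟩⟩ := (hiso.of_injective _ LinearMap.inr_injective).linearEquiv_fun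
  have : FiniteDimensional F S :=
    Module.Finite.of_injective (S.subtype.restrictScalars F) S.injective_subtype
  have : Nontrivial S := IsSimpleModule.nontrivial A S
  have hdim : ∀ j, finrank F (Fin j → S) = j * finrank F S := by
    simp [Module.finrank_pi_fintype]
  obtain rfl : k = l := by
    refine Nat.eq_of_mul_eq_mul_right (finrank_pos (R := F) (M := S)) ?_
    rw [← hdim, ← hdim, ← (eM.restrictScalars F).finrank_eq, ← (eN.restrictScalars F).finrank_eq, h]
  exact ⟨eM.trans eN.symm⟩

end SimpleModules

section Representations

variable {F L A V : Type*} [Field F] [Field L] [Algebra F L] [Ring A] [Algebra F A]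
  [AddCommGroup V] [Module F V] [Module L V] [IsScalarTower F L V]

theorem nonempty_algHom_of_algHom_end [IsSimpleRing A] [FiniteDimensional F A]
    [FiniteDimensional F V] (ρ : A →ₐ[F] Module.End L V) (h : finrank F V = finrank F A) :
    Nonempty (L →ₐ[F] A) := by
  let _ : Module A V := Module.compHom V ρ.toRingHom
  have : IsScalarTower F A V := ⟨fun c a v => show ρ (c • a) v = c • ρ a v by rw [map_smul]; rfl⟩
  have : SMulCommClass L A V := ⟨fun l a v => ((ρ a).map_smul l v).symm⟩
  obtain ⟨g⟩ := IsSimpleRing.nonempty_linearEquiv_of_finrank_eq (A := A) (M := A) (N := V) h.symm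
  let φ : L →ₐ[F] Aᵐᵒᵖ := (AlgEquiv.moduleEndSelf F).symm.toAlgHom.comp
    ((g.symm.conjAlgEquiv F).toAlgHom.comp (Algebra.lsmul F A V))
  exact ⟨(AlgEquiv.opOp F A).symm.toAlgHom.comp (φ.toOpposite fun x y => (Commute.all x y).map φ)⟩

theorem nonempty_algEquiv_end_of_algHom [IsSimpleRing (L ⊗[F] A)] [FiniteDimensional F A]
    [FiniteDimensional L V] [Nontrivial V] (ρ : A →ₐ[F] Module.End L V) (h : finrank F A = finrank L V * finrank L V) :
    Nonempty (L ⊗[F] A ≃ₐ[L] Module.End L V) := by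
  let φ := Algebra.TensorProduct.lift (Algebra.ofId L (Module.End L V)) ρ
    fun l a => Algebra.commute_algebraMap_left l (ρ a)
  have hinj : Function.Injective φ := φ.toRingHom.injective
  have hrank : finrank L (L ⊗[F] A) = finrank L (Module.End L V) := by
    rw [finrank_baseChange, finrank_linearMap, h]
  exact ⟨AlgEquiv.ofBijective φ
    ⟨hinj, (LinearMap.injective_iff_surjective_of_finrank_eq_finrank hrank).1 hinj⟩⟩

end Representations

section Splitting

variable {F L A : Type*} [Field F] [Field L] [Algebra F L] [Ring A] [Algebra F A]

/-- `A` as an `L`-module through right multiplication by `f`. -/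
abbrev AlgHom.rightModule (f : L →ₐ[F] A) : Module L A :=
  Module.compHom A ((f : L →+* A).toOpposite fun x y => (Commute.all x y).map f)

theorem nonempty_algEquiv_matrix_of_algHom [Algebra.IsCentral F A] [IsSimpleRing A]
    [FiniteDimensional F A] {n : ℕ} (hA : finrank F A = n * n) (hL : finrank F L = n)
    (f : L →ₐ[F] A) : Nonempty (L ⊗[F] A ≃ₐ[L] Matrix (Fin n) (Fin n) L) := by
  let _ := f.rightModule
  have smul_def : ∀ (l : L) (x : A), l • x = x * f l := fun _ _ => rfl
  have : IsScalarTower F L A := ⟨fun c l x => by simp only [smul_def, map_smul, mul_smul_comm]⟩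
  have : SMulCommClass A L A := ⟨fun a l x => by simp only [smul_def, smul_eq_mul, mul_assoc]⟩
  have : FiniteDimensional L A := FiniteDimensional.right F L A
  have hn : 0 < n := Nat.pos_of_mul_pos_left (hA ▸ finrank_pos)
  have hLA : finrank L A = n :=
    Nat.eq_of_mul_eq_mul_left hn (by rw [← hL, finrank_mul_finrank, hL, hA])
  have : IsSimpleRing (L ⊗[F] A) := .of_ringEquiv (Algebra.TensorProduct.comm F A L).toRingEquiv
    Algebra.TensorProduct.isSimpleRing_of_isCentral
  obtain ⟨e⟩ := nonempty_algEquiv_end_of_algHom (Algebra.lsmul F L A : A →ₐ[F] Module.End L A)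
    (by rw [hLA, hA])
  exact ⟨e.trans (algEquivMatrix (finBasisOfFinrankEq L A hLA))⟩

theorem nonempty_algHom_of_algEquiv_matrix [IsSimpleRing A] [FiniteDimensional F A]
    [FiniteDimensional F L] {n : ℕ} (hA : finrank F A = n * n) (hL : finrank F L = n)
    (e : L ⊗[F] A ≃ₐ[L] Matrix (Fin n) (Fin n) L) : Nonempty (L →ₐ[F] A) :=
  nonempty_algHom_of_algHom_end (V := Fin n → L)
    (((e.trans (algEquivMatrix (Pi.basisFun L (Fin n))).symm).toAlgHom.restrictScalars F).comp
      Algebra.TensorProduct.includeRight)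
    (by simp [finrank_pi_fintype, hA, hL])

end Splitting

theorem outer_forms_stmt13_general
    (F A L : Type) [Field F] [Ring A] [Algebra F A]
    [Algebra.IsCentral F A] [IsSimpleRing A] [FiniteDimensional F A]
    [Field L] [Algebra F L] [FiniteDimensional F L]
    (n : ℕ)
    (hA : Module.finrank F A = n * n)
    (hL : Module.finrank F L = n) :
    (∃ f : L →ₐ[F] A, Function.Injective f) ↔
      Nonempty (L ⊗[F] A ≃ₐ[L] Matrix (Fin n) (Fin n) L) := by
  constructor
  · rintro ⟨f, -⟩
    exact nonempty_algEquiv_matrix_of_algHom hA hL f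
  · rintro ⟨e⟩
    obtain ⟨f⟩ := nonempty_algHom_of_algEquiv_matrix hA hL e
    exact ⟨f, f.toRingHom.injective⟩

theorem outer_forms_stmt13
    (F A L : Type) [Field F] [Ring A] [Algebra F A]
    [Algebra.IsCentral F A] [IsSimpleRing A] [FiniteDimensional F A]
    [Field L] [Algebra F L] [FiniteDimensional F L] [Algebra.IsSeparable F L]
    (n : ℕ) (hn : 0 < n)
    (hA : Module.finrank F A = n * n)
    (hL : Module.finrank F L = n) :
    (∃ f : L →ₐ[F] A, Function.Injective f) ↔
      Nonempty (L ⊗[F] A ≃ₐ[L] Matrix (Fin n) (Fin n) L) :=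
  outer_forms_stmt13_general F A L n hA hL
end

section
/- Let F be a field and L'/F any field extension of degree 3. If E/F is a field extension such that the algebraic closure of F in E has degree at most 2 over F, then E and L' are linearly disjoint over F. -/
/-!
An extension `L'/F` of prime degree is generated by any element outside `F`, so it has a power
basis, and `E ⊗[F] L' ≅ E[X]/(p)` for the minimal polynomial `p` of its generator. A root of the
cubic `p` in `E` would be algebraic of degree `3` over `F`, which does not fit into the algebraic
closure of `F` in `E`; a cubic without roots is irreducible, so `E[X]/(p)` is a field.
-/

open scoped TensorProduct
open Polynomial IntermediateField Module

section

variable {F E L : Type*} [Field F] [Field E] [Algebra F E] [Field L] [Algebra F L]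

theorem Field.nonempty_powerBasis_of_finrank_prime (hp : (finrank F L).Prime) :
    Nonempty (PowerBasis F L) := by
  have := isSimpleOrder_of_finrank_prime F L hp
  have : FiniteDimensional F L := Module.finite_of_finrank_pos hp.pos
  obtain ⟨x, -, hx⟩ := SetLike.exists_of_lt (bot_lt_top : (⊥ : IntermediateField F L) < ⊤)
  have hgen : F⟮x⟯ = ⊤ :=
    (IsSimpleOrder.eq_bot_or_eq_top F⟮x⟯).resolve_left (adjoin_simple_eq_bot_iff.not.mpr hx)
  exact ⟨(adjoin.powerBasis (IsIntegral.of_finite F x)).map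
    ((equivOfEq hgen).trans topEquiv)⟩

theorem minpoly.natDegree_le_finrank_integralClosure
    [FiniteDimensional F (integralClosure F E)] {y : E} (hy : IsIntegral F y) :
    (minpoly F y).natDegree ≤ finrank F (integralClosure F E) := by
  have hmin : minpoly F y = minpoly F (⟨y, hy⟩ : integralClosure F E) :=
    minpoly.algebraMap_eq (B := integralClosure F E) Subtype.val_injective ⟨y, hy⟩
  rw [hmin]
  exact minpoly.natDegree_le _

theorem Polynomial.irreducible_map_of_finrank_integralClosure_lt
    [FiniteDimensional F (integralClosure F E)] {p : F[X]} (hirr : Irreducible p)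
    (hp3 : p.natDegree ≤ 3) (hlt : finrank F (integralClosure F E) < p.natDegree) :
    Irreducible (p.map (algebraMap F E)) := by
  have hpos : 0 < finrank F (integralClosure F E) := finrank_pos
  rw [irreducible_iff_roots_eq_zero_of_degree_le_three (by rw [natDegree_map]; omega)
    (by rw [natDegree_map]; exact hp3)]
  refine Multiset.eq_zero_of_forall_notMem fun y hy => hlt.not_ge ?_
  have hroot : aeval y p = 0 := by
    rwa [mem_roots_map hirr.ne_zero, ← aeval_def] at hy
  have hmin := minpoly.eq_of_irreducible hirr hroot
  have hy : IsIntegral F y := IsAlgebraic.isIntegral ⟨p, hirr.ne_zero, hroot⟩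
  calc p.natDegree = (minpoly F y).natDegree := by
        rw [← hmin, natDegree_mul_C (inv_ne_zero (leadingCoeff_ne_zero.mpr hirr.ne_zero))]
    _ ≤ _ := minpoly.natDegree_le_finrank_integralClosure hy

theorem Algebra.TensorProduct.isField_of_irreducible_map_minpoly (pb : PowerBasis F L)
    (hirr : Irreducible ((minpoly F pb.gen).map (algebraMap F E))) : IsField (E ⊗[F] L) := by
  set q := (minpoly F pb.gen).map (algebraMap F E)
  have : Fact (Irreducible q) := ⟨hirr⟩
  have hroot : aeval (AdjoinRoot.root q) (minpoly F pb.gen) = 0 := by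
    rw [← aeval_map_algebraMap E, AdjoinRoot.aeval_eq, AdjoinRoot.mk_self]
  let φ : E ⊗[F] L →ₐ[E] AdjoinRoot q :=
    Algebra.TensorProduct.lift (Algebra.ofId E _) (pb.lift _ hroot) fun _ _ => .all _ _
  have hsurj : Function.Surjective φ := by
    rw [← AlgHom.range_eq_top, ← top_le_iff, ← AdjoinRoot.adjoinRoot_eq_top,
      Algebra.adjoin_le_iff, Set.singleton_subset_iff]
    exact ⟨1 ⊗ₜ pb.gen, by simp [φ]⟩
  have : FiniteDimensional F L := pb.finite
  have : FiniteDimensional E (AdjoinRoot q) := (AdjoinRoot.powerBasis hirr.ne_zero).finite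
  have hrank : finrank E (E ⊗[F] L) = finrank E (AdjoinRoot q) := by
    rw [finrank_baseChange, (AdjoinRoot.powerBasis hirr.ne_zero).finrank, pb.finrank,
      AdjoinRoot.powerBasis_dim, natDegree_map, pb.natDegree_minpoly]
  have hinj : Function.Injective φ :=
    (LinearMap.injective_iff_surjective_of_finrank_eq_finrank hrank).mpr hsurj
  exact (RingEquiv.ofBijective φ ⟨hinj, hsurj⟩).toMulEquiv.isField (Field.toIsField _)

end

theorem outer_forms_stmt18
    (F E L' : Type) [Field F] [Field E] [Algebra F E] [Field L'] [Algebra F L']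
    (hL : Module.finrank F L' = 3)
    (hfin : FiniteDimensional F (integralClosure F E))
    (hdeg : Module.finrank F (integralClosure F E) ≤ 2) :
    IsField (E ⊗[F] L') := by
  obtain ⟨pb⟩ := Field.nonempty_powerBasis_of_finrank_prime (hL ▸ Nat.prime_three)
  have hdim : (minpoly F pb.gen).natDegree = 3 := by rw [pb.natDegree_minpoly, ← pb.finrank, hL]
  exact Algebra.TensorProduct.isField_of_irreducible_map_minpoly pb
    (irreducible_map_of_finrank_integralClosure_lt (minpoly.irreducible pb.isIntegral_gen)
      hdim.le (by omega))
end
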